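/- arXiv:1807.10477 — 2 statements merged into one kernel-verified Lean document; each statement's English description precedes it below -/
import Mathlib

section
/- The loop Diff(A) is in general not power associative: for A = M_2(ℚ) and the series c = e + c_1 λ^2 + c_2 λ^3 with c_1 = [[1,1],[0,1]] and c_2 = [[1,0],[1,0]], one has (c∘c)∘c ≠ c∘(c∘c); in fact the coefficient of λ^6 in (c∘c)∘c − c∘(c∘c) equals c_1 c_2 c_1^2 − c_1^2 c_2 c_1 = [[−1,1],[0,1]] ≠ 0. -/
/-- Composition of formal diffeomorphisms tangent to the identity, on coefficient
sequences (`a n` is the coefficient of `λ^{n+1}`). -/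
def comp {A : Type*} [Ring A] (a b : ℕ → A) : ℕ → A := fun n =>
  ∑ m ∈ Finset.range (n + 1), ∑ k ∈ Finset.Nat.antidiagonalTuple (m + 1) (n - m),
    a m * (List.ofFn fun i : Fin (m + 1) => b (k i)).prod

noncomputable def c1 : Matrix (Fin 2) (Fin 2) ℚ := !![1, 1; 0, 1]
noncomputable def c2 : Matrix (Fin 2) (Fin 2) ℚ := !![1, 0; 1, 0]

/-- The series `c = λ + c_1 λ² + c_2 λ³` with matrix coefficients
`c_1 = [[1,1],[0,1]]`, `c_2 = [[1,0],[1,0]]` in `M_2(ℚ)`. -/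
noncomputable def cser : ℕ → Matrix (Fin 2) (Fin 2) ℚ :=
  fun n => if n = 0 then 1 else if n = 1 then c1 else if n = 2 then c2 else 0

set_option maxHeartbeats 1000000 in
lemma comp0 {A : Type*} [Ring A] (a b : ℕ → A) : comp a b 0 =
      a 0 * (b 0) := by
  simp only [comp, Finset.sum_range_succ, Finset.sum_range_zero,
    show Finset.Nat.antidiagonalTuple 1 0 = {![0]} from by decide,
    Finset.sum_singleton]
  simp (config := { decide := true }) only [Finset.sum_insert, Finset.mem_insert,
    Finset.mem_singleton, Finset.sum_singleton, List.ofFn_succ, List.ofFn_zero,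
    List.prod_cons, List.prod_nil, Matrix.cons_val_zero, Matrix.cons_val_one,
    Matrix.head_cons, Matrix.cons_val_succ, Fin.succ_zero_eq_one]
  noncomm_ring

set_option maxHeartbeats 1000000 in
lemma comp1 {A : Type*} [Ring A] (a b : ℕ → A) : comp a b 1 =
      a 0 * (b 1) +
      a 1 * (b 0*b 0) := by
  simp only [comp, Finset.sum_range_succ, Finset.sum_range_zero,
    show Finset.Nat.antidiagonalTuple 1 1 = {![1]} from by decide,
    show Finset.Nat.antidiagonalTuple 2 0 = {![0,0]} from by decide,
    Finset.sum_singleton]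
  simp (config := { decide := true }) only [Finset.sum_insert, Finset.mem_insert,
    Finset.mem_singleton, Finset.sum_singleton, List.ofFn_succ, List.ofFn_zero,
    List.prod_cons, List.prod_nil, Matrix.cons_val_zero, Matrix.cons_val_one,
    Matrix.head_cons, Matrix.cons_val_succ, Fin.succ_zero_eq_one]
  noncomm_ring

set_option maxHeartbeats 1000000 in
lemma comp2 {A : Type*} [Ring A] (a b : ℕ → A) : comp a b 2 =
      a 0 * (b 2) +
      a 1 * (b 0*b 1 + b 1*b 0) +
      a 2 * (b 0*b 0*b 0) := by
  simp only [comp, Finset.sum_range_succ, Finset.sum_range_zero,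
    show Finset.Nat.antidiagonalTuple 1 2 = {![2]} from by decide,
    show Finset.Nat.antidiagonalTuple 2 1 = {![0,1],![1,0]} from by decide,
    show Finset.Nat.antidiagonalTuple 3 0 = {![0,0,0]} from by decide,
    Finset.sum_singleton]
  simp (config := { decide := true }) only [Finset.sum_insert, Finset.mem_insert,
    Finset.mem_singleton, Finset.sum_singleton, List.ofFn_succ, List.ofFn_zero,
    List.prod_cons, List.prod_nil, Matrix.cons_val_zero, Matrix.cons_val_one,
    Matrix.head_cons, Matrix.cons_val_succ, Fin.succ_zero_eq_one]
  noncomm_ring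

set_option maxHeartbeats 1000000 in
lemma comp3 {A : Type*} [Ring A] (a b : ℕ → A) : comp a b 3 =
      a 0 * (b 3) +
      a 1 * (b 0*b 2 + b 1*b 1 + b 2*b 0) +
      a 2 * (b 0*b 0*b 1 + b 0*b 1*b 0 + b 1*b 0*b 0) +
      a 3 * (b 0*b 0*b 0*b 0) := by
  simp only [comp, Finset.sum_range_succ, Finset.sum_range_zero,
    show Finset.Nat.antidiagonalTuple 1 3 = {![3]} from by decide,
    show Finset.Nat.antidiagonalTuple 2 2 = {![0,2],![1,1],![2,0]} from by decide,
    show Finset.Nat.antidiagonalTuple 3 1 = {![0,0,1],![0,1,0],![1,0,0]} from by decide,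
    show Finset.Nat.antidiagonalTuple 4 0 = {![0,0,0,0]} from by decide,
    Finset.sum_singleton]
  simp (config := { decide := true }) only [Finset.sum_insert, Finset.mem_insert,
    Finset.mem_singleton, Finset.sum_singleton, List.ofFn_succ, List.ofFn_zero,
    List.prod_cons, List.prod_nil, Matrix.cons_val_zero, Matrix.cons_val_one,
    Matrix.head_cons, Matrix.cons_val_succ, Fin.succ_zero_eq_one]
  noncomm_ring

set_option maxHeartbeats 1000000 in
lemma comp4 {A : Type*} [Ring A] (a b : ℕ → A) : comp a b 4 =
      a 0 * (b 4) +
      a 1 * (b 0*b 3 + b 1*b 2 + b 2*b 1 + b 3*b 0) +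
      a 2 * (b 0*b 0*b 2 + b 0*b 1*b 1 + b 0*b 2*b 0 + b 1*b 0*b 1 + b 1*b 1*b 0 + b 2*b 0*b 0) +
      a 3 * (b 0*b 0*b 0*b 1 + b 0*b 0*b 1*b 0 + b 0*b 1*b 0*b 0 + b 1*b 0*b 0*b 0) +
      a 4 * (b 0*b 0*b 0*b 0*b 0) := by
  simp only [comp, Finset.sum_range_succ, Finset.sum_range_zero,
    show Finset.Nat.antidiagonalTuple 1 4 = {![4]} from by decide,
    show Finset.Nat.antidiagonalTuple 2 3 = {![0,3],![1,2],![2,1],![3,0]} from by decide,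
    show Finset.Nat.antidiagonalTuple 3 2 = {![0,0,2],![0,1,1],![0,2,0],![1,0,1],![1,1,0],![2,0,0]} from by decide,
    show Finset.Nat.antidiagonalTuple 4 1 = {![0,0,0,1],![0,0,1,0],![0,1,0,0],![1,0,0,0]} from by decide,
    show Finset.Nat.antidiagonalTuple 5 0 = {![0,0,0,0,0]} from by decide,
    Finset.sum_singleton]
  simp (config := { decide := true }) only [Finset.sum_insert, Finset.mem_insert,
    Finset.mem_singleton, Finset.sum_singleton, List.ofFn_succ, List.ofFn_zero,
    List.prod_cons, List.prod_nil, Matrix.cons_val_zero, Matrix.cons_val_one,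
    Matrix.head_cons, Matrix.cons_val_succ, Fin.succ_zero_eq_one]
  noncomm_ring

set_option maxHeartbeats 1000000 in
lemma comp5 {A : Type*} [Ring A] (a b : ℕ → A) : comp a b 5 =
      a 0 * (b 5) +
      a 1 * (b 0*b 4 + b 1*b 3 + b 2*b 2 + b 3*b 1 + b 4*b 0) +
      a 2 * (b 0*b 0*b 3 + b 0*b 1*b 2 + b 0*b 2*b 1 + b 0*b 3*b 0 + b 1*b 0*b 2 + b 1*b 1*b 1 + b 1*b 2*b 0 + b 2*b 0*b 1 + b 2*b 1*b 0 + b 3*b 0*b 0) +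
      a 3 * (b 0*b 0*b 0*b 2 + b 0*b 0*b 1*b 1 + b 0*b 0*b 2*b 0 + b 0*b 1*b 0*b 1 + b 0*b 1*b 1*b 0 + b 0*b 2*b 0*b 0 + b 1*b 0*b 0*b 1 + b 1*b 0*b 1*b 0 + b 1*b 1*b 0*b 0 + b 2*b 0*b 0*b 0) +
      a 4 * (b 0*b 0*b 0*b 0*b 1 + b 0*b 0*b 0*b 1*b 0 + b 0*b 0*b 1*b 0*b 0 + b 0*b 1*b 0*b 0*b 0 + b 1*b 0*b 0*b 0*b 0) +
      a 5 * (b 0*b 0*b 0*b 0*b 0*b 0) := by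
  simp only [comp, Finset.sum_range_succ, Finset.sum_range_zero,
    show Finset.Nat.antidiagonalTuple 1 5 = {![5]} from by decide,
    show Finset.Nat.antidiagonalTuple 2 4 = {![0,4],![1,3],![2,2],![3,1],![4,0]} from by decide,
    show Finset.Nat.antidiagonalTuple 3 3 = {![0,0,3],![0,1,2],![0,2,1],![0,3,0],![1,0,2],![1,1,1],![1,2,0],![2,0,1],![2,1,0],![3,0,0]} from by decide,
    show Finset.Nat.antidiagonalTuple 4 2 = {![0,0,0,2],![0,0,1,1],![0,0,2,0],![0,1,0,1],![0,1,1,0],![0,2,0,0],![1,0,0,1],![1,0,1,0],![1,1,0,0],![2,0,0,0]} from by decide,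
    show Finset.Nat.antidiagonalTuple 5 1 = {![0,0,0,0,1],![0,0,0,1,0],![0,0,1,0,0],![0,1,0,0,0],![1,0,0,0,0]} from by decide,
    show Finset.Nat.antidiagonalTuple 6 0 = {![0,0,0,0,0,0]} from by decide,
    Finset.sum_singleton]
  simp (config := { decide := true }) only [Finset.sum_insert, Finset.mem_insert,
    Finset.mem_singleton, Finset.sum_singleton, List.ofFn_succ, List.ofFn_zero,
    List.prod_cons, List.prod_nil, Matrix.cons_val_zero, Matrix.cons_val_one,
    Matrix.head_cons, Matrix.cons_val_succ, Fin.succ_zero_eq_one]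
  noncomm_ring

lemma cs0 : cser 0 = 1 := rfl
lemma cs1 : cser 1 = c1 := rfl
lemma cs2 : cser 2 = c2 := rfl
lemma cs3 : cser 3 = 0 := rfl
lemma cs4 : cser 4 = 0 := rfl
lemma cs5 : cser 5 = 0 := rfl

set_option maxHeartbeats 2000000 in
lemma key : (comp (comp cser cser) cser) 5 - (comp cser (comp cser cser)) 5
      = c1 * c2 * c1 ^ 2 - c1 ^ 2 * c2 * c1 := by
  rw [comp5 (comp cser cser) cser, comp5 cser (comp cser cser)]
  rw [comp0, comp1, comp2, comp3, comp4, comp5]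
  simp only [cs0, cs1, cs2, cs3, cs4, cs5]
  noncomm_ring

/-- The loop `Diff(A)` is in general not power associative: for `A = M_2(ℚ)` and the
series `c = λ + c_1 λ² + c_2 λ³` above, `(c∘c)∘c ≠ c∘(c∘c)`; the coefficient of `λ⁶`
in `(c∘c)∘c − c∘(c∘c)` equals `c_1 c_2 c_1² − c_1² c_2 c_1 = [[−1,1],[0,1]] ≠ 0`. -/
theorem diff_not_powerAssociative :
    comp (comp cser cser) cser ≠ comp cser (comp cser cser) ∧
    (comp (comp cser cser) cser) 5 - (comp cser (comp cser cser)) 5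
      = c1 * c2 * c1 ^ 2 - c1 ^ 2 * c2 * c1 ∧
    c1 * c2 * c1 ^ 2 - c1 ^ 2 * c2 * c1 = !![(-1 : ℚ), 1; 0, 1] ∧
    (!![(-1 : ℚ), 1; 0, 1] : Matrix (Fin 2) (Fin 2) ℚ) ≠ 0 := by
  have h3 : c1 * c2 * c1 ^ 2 - c1 ^ 2 * c2 * c1 = !![(-1 : ℚ), 1; 0, 1] := by
    ext i j
    fin_cases i <;> fin_cases j <;>
      simp [c1, c2, pow_two, Matrix.mul_apply, Fin.sum_univ_two] <;> norm_num
  have h4 : (!![(-1 : ℚ), 1; 0, 1] : Matrix (Fin 2) (Fin 2) ℚ) ≠ 0 := by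
    intro h
    have := congrFun (congrFun h 0) 0
    norm_num at this
  refine ⟨?_, key, h3, h4⟩
  intro h
  have h5 := congrFun h 5
  have hz : (comp (comp cser cser) cser) 5 - (comp cser (comp cser cser)) 5 = 0 := by
    rw [h5]; exact sub_self _
  rw [key, h3] at hz
  exact h4 hz
end

section
/- The Lagrange coefficients satisfy the recursion d_ℓ(n_1,...,n_ℓ) = ∑_{j=1}^{ℓ} ∑_{(p_1,...,p_j) composition of ℓ} C(n_1+1, j) · d_{p_1−1}(n_2,...,n_{p_1}) · d_{p_2−1}(n_{p_1+2},...,n_{p_1+p_2}) ⋯ d_{p_j−1}(n_{p_1+⋯+p_{j-1}+2},...,n_ℓ), where the arguments of consecutive d-factors partition the remaining indices by skipping one index at the start of each block. -/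
/-- The compositions of `n` of length `j`: tuples of `j` positive integers summing
to `n`. -/
def compositions (j n : ℕ) : Finset (Fin j → ℕ) :=
  (Finset.Nat.antidiagonalTuple j n).filter fun p => ∀ i, 0 < p i

/-- The set `M_ℓ` of ballot sequences: `(m_1,...,m_ℓ) ∈ ℕ^ℓ` with `∑ m_i = ℓ` and
`m_1+⋯+m_j ≥ j` for `j < ℓ`. -/
def lagM (ℓ : ℕ) : Finset (Fin ℓ → ℕ) :=
  (Finset.Nat.antidiagonalTuple ℓ ℓ).filter fun m =>
    ∀ j, j < ℓ → j ≤ ∑ i ∈ Finset.univ.filter (fun i : Fin ℓ => (i : ℕ) < j), m i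

/-- The Lagrange coefficient `d_ℓ(n_1,...,n_ℓ)`, taking the arguments from the
(0-indexed) sequence `nn`, so `n_i = nn (i-1)`; `d_0 = 1`. -/
def lagd (ℓ : ℕ) (nn : ℕ → ℕ) : ℕ :=
  ∑ m ∈ lagM ℓ, ∏ i : Fin ℓ, (nn (i : ℕ) + 1).choose (m i)

/-- Partial sum `P_{i} = p_1 + ⋯ + p_i` of the first `i` entries of `p`. -/
def psum {j : ℕ} (p : Fin j → ℕ) (i : Fin j) : ℕ :=
  ∑ r ∈ Finset.univ.filter (fun r : Fin j => (r : ℕ) < (i : ℕ)), p r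

open Finset

namespace LagRec

/-- Extension of a `Fin L`-tuple to `ℕ` by zero. -/
def fext {L : ℕ} (m : Fin L → ℕ) : ℕ → ℕ := fun t => if h : t < L then m ⟨t, h⟩ else 0

lemma fext_lt {L : ℕ} (m : Fin L → ℕ) {k : ℕ} (h : k < L) : fext m k = m ⟨k, h⟩ := dif_pos h

lemma fext_ge {L : ℕ} (m : Fin L → ℕ) {k : ℕ} (h : ¬ k < L) : fext m k = 0 := dif_neg h

lemma fext_val {L : ℕ} (m : Fin L → ℕ) (i : Fin L) : fext m (i : ℕ) = m i := by
  rw [fext_lt m i.isLt]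

/-- Partial sums of the extension. -/
def PS {L : ℕ} (m : Fin L → ℕ) (t : ℕ) : ℕ := ∑ k ∈ range t, fext m k

lemma PS_succ {L : ℕ} (m : Fin L → ℕ) (t : ℕ) : PS m (t + 1) = PS m t + fext m t :=
  Finset.sum_range_succ _ _

lemma PS_add {L : ℕ} (m : Fin L → ℕ) (a b : ℕ) :
    PS m (a + b) = PS m a + ∑ k ∈ range b, fext m (a + k) :=
  Finset.sum_range_add _ _ _

lemma PS_mono {L : ℕ} (m : Fin L → ℕ) {a b : ℕ} (h : a ≤ b) : PS m a ≤ PS m b := by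
  obtain ⟨c, rfl⟩ := Nat.exists_eq_add_of_le h
  rw [PS_add]; omega

lemma sum_fin {L : ℕ} (m : Fin L → ℕ) : ∑ i : Fin L, m i = PS m L := by
  rw [PS, ← Fin.sum_univ_eq_sum_range (fext m) L]
  exact Finset.sum_congr rfl fun i _ => (fext_val m i).symm

lemma prod_fin {L : ℕ} (ν : ℕ → ℕ) (m : Fin L → ℕ) :
    ∏ i : Fin L, (ν (i : ℕ) + 1).choose (m i)
      = ∏ k ∈ range L, (ν k + 1).choose (fext m k) := by
  rw [← Fin.prod_univ_eq_prod_range (fun k => (ν k + 1).choose (fext m k)) L]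
  exact Finset.prod_congr rfl fun i _ => by rw [fext_val]

lemma sum_filter_lt {L : ℕ} (m : Fin L → ℕ) {t : ℕ} (ht : t ≤ L) :
    ∑ i ∈ Finset.univ.filter (fun i : Fin L => (i : ℕ) < t), m i = PS m t := by
  rw [Finset.sum_filter]
  have h1 : ∀ i : Fin L, (if (i : ℕ) < t then m i else 0)
      = (fun k => if k < t then fext m k else 0) (i : ℕ) := by
    intro i; simp only [fext_val]
  rw [Finset.sum_congr rfl fun i _ => h1 i,
    Fin.sum_univ_eq_sum_range (fun k => if k < t then fext m k else 0) L, ← Finset.sum_filter]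
  rw [PS]
  apply Finset.sum_congr _ fun _ _ => rfl
  ext k; simp only [mem_filter, mem_range]; omega

lemma mem_lagM {L : ℕ} {m : Fin L → ℕ} :
    m ∈ lagM L ↔ PS m L = L ∧ ∀ t, t < L → t ≤ PS m t := by
  rw [lagM, mem_filter, Finset.Nat.mem_antidiagonalTuple, sum_fin]
  constructor
  · rintro ⟨h1, h2⟩
    exact ⟨h1, fun t ht => by rw [← sum_filter_lt m ht.le]; exact h2 t ht⟩
  · rintro ⟨h1, h2⟩
    exact ⟨h1, fun t ht => by rw [sum_filter_lt m ht.le]; exact h2 t ht⟩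

/-- The set `N_{j,L}`: tails of ballot sequences starting at "height" `j`. -/
def lagN (j L : ℕ) : Finset (Fin L → ℕ) :=
  (Finset.Nat.antidiagonalTuple L (L + 1 - j)).filter fun m =>
    (∑ i, m i) + j = L + 1 ∧
      ∀ t, t < L → t + 1 ≤ j + ∑ i ∈ Finset.univ.filter (fun i : Fin L => (i : ℕ) < t), m i

lemma mem_lagN {j L : ℕ} {m : Fin L → ℕ} :
    m ∈ lagN j L ↔ PS m L + j = L + 1 ∧ ∀ t, t < L → t + 1 ≤ j + PS m t := by
  rw [lagN, mem_filter, Finset.Nat.mem_antidiagonalTuple, sum_fin]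
  constructor
  · rintro ⟨_, h1, h2⟩
    exact ⟨h1, fun t ht => by rw [← sum_filter_lt m ht.le]; exact h2 t ht⟩
  · rintro ⟨h1, h2⟩
    exact ⟨by omega, h1, fun t ht => by rw [sum_filter_lt m ht.le]; exact h2 t ht⟩

lemma mem_compositions {j n : ℕ} {p : Fin j → ℕ} :
    p ∈ compositions j n ↔ (∑ i, p i = n) ∧ ∀ i, 0 < p i := by
  rw [compositions, mem_filter, Finset.Nat.mem_antidiagonalTuple]

end LagRec
namespace LagRec

lemma fext_tail {L : ℕ} (m : Fin (L + 1) → ℕ) (k : ℕ) :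
    fext (Fin.tail m) k = fext m (k + 1) := by
  by_cases h : k < L
  · rw [fext_lt _ h, fext_lt m (by omega : k + 1 < L + 1)]
    rfl
  · rw [fext_ge _ h, fext_ge m (by omega)]

lemma PS_tail {L : ℕ} (m : Fin (L + 1) → ℕ) (t : ℕ) :
    PS m (t + 1) = m 0 + PS (Fin.tail m) t := by
  have : t + 1 = 1 + t := by omega
  rw [this, PS_add]
  congr 1
  · exact Finset.sum_congr rfl fun k _ => by rw [fext_tail, Nat.add_comm 1 k]

lemma head_split (L : ℕ) (nn : ℕ → ℕ) :
    (∑ m ∈ lagM (L + 1), ∏ i : Fin (L + 1), (nn (i : ℕ) + 1).choose (m i))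
      = ∑ j ∈ Icc 1 (L + 1), (nn 0 + 1).choose j *
          ∑ m ∈ lagN j L, ∏ i : Fin L, (nn ((i : ℕ) + 1) + 1).choose (m i) := by
  have hmap : ∀ m ∈ lagM (L + 1), m 0 ∈ Icc 1 (L + 1) := by
    intro m hm
    rw [mem_lagM] at hm
    obtain ⟨h1, h2⟩ := hm
    have hm0 : PS m 1 = m 0 := by
      rw [PS, Finset.sum_range_one, fext_lt m (by omega : 0 < L + 1)]; rfl
    have hle : PS m 1 ≤ PS m (L + 1) := PS_mono m (by omega)
    have h1le : 1 ≤ PS m 1 := by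
      rcases Nat.lt_or_ge 1 (L + 1) with h | h
      · exact h2 1 h
      · have hL : L = 0 := by omega
        subst hL
        norm_num at h1
        omega
    rw [mem_Icc]; omega
  rw [← Finset.sum_fiberwise_of_maps_to hmap]
  refine Finset.sum_congr rfl fun j hj => ?_
  rw [mem_Icc] at hj
  rw [Finset.mul_sum]
  refine Finset.sum_nbij' Fin.tail (Fin.cons (α := fun _ => ℕ) j) ?_ ?_ ?_ ?_ ?_
  · intro m hm
    rw [mem_filter] at hm
    obtain ⟨hm, hm0⟩ := hm
    rw [mem_lagM] at hm
    obtain ⟨h1, h2⟩ := hm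
    rw [mem_lagN]
    constructor
    · have := PS_tail m L; omega
    · intro t ht
      have := PS_tail m t
      have := h2 (t + 1) (by omega)
      omega
  · intro m' hm'
    rw [mem_lagN] at hm'
    obtain ⟨h1, h2⟩ := hm'
    rw [mem_filter, mem_lagM]
    have htail : Fin.tail (α := fun _ => ℕ) (Fin.cons j m') = m' := by funext i; simp [Fin.tail]
    have hcons0 : Fin.cons (α := fun _ => ℕ) j m' 0 = j := rfl
    refine ⟨⟨?_, ?_⟩, hcons0⟩
    · have := PS_tail (Fin.cons j m') L
      rw [htail, hcons0] at this
      omega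
    · intro t ht
      rcases Nat.eq_zero_or_pos t with rfl | hpt
      · omega
      · have h3 := PS_tail (Fin.cons j m') (t - 1)
        rw [htail, hcons0, show t - 1 + 1 = t from by omega] at h3
        rcases Nat.lt_or_ge (t - 1) L with h | h
        · have := h2 (t - 1) h; omega
        · have hsL : t - 1 = L := by omega
          rw [hsL] at h3; omega
  · intro m hm
    rw [mem_filter] at hm
    rw [← hm.2]
    exact Fin.cons_self_tail m
  · intro m' _
    funext i
    simp [Fin.tail]
  · intro m hm
    rw [mem_filter] at hm
    rw [Fin.prod_univ_succ, hm.2]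
    rfl

end LagRec
namespace LagRec

/-- First passage time: least `t` with `PS m t + 1 ≤ t` (or `t = L` as fallback). -/
def fpass (L : ℕ) (m : Fin L → ℕ) : ℕ :=
  Nat.find (p := fun t => PS m t + 1 ≤ t ∨ t = L) ⟨L, Or.inr rfl⟩

lemma fpass_eq {L q : ℕ} (m : Fin L → ℕ) (h1 : 1 ≤ q) (hqL : q ≤ L)
    (hq : PS m q + 1 ≤ q) (hmin : ∀ t, t < q → t ≤ PS m t) : fpass L m = q := by
  rw [fpass, Nat.find_eq_iff]
  refine ⟨Or.inl hq, fun t ht => ?_⟩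
  push_neg
  exact ⟨by have := hmin t ht; omega, by omega⟩

lemma fpass_spec {j L : ℕ} (hj : 1 ≤ j) {m : Fin L → ℕ} (hm : m ∈ lagN (j + 1) L) :
    1 ≤ fpass L m ∧ fpass L m ≤ L ∧ PS m (fpass L m) + 1 = fpass L m ∧
      fext m (fpass L m - 1) = 0 ∧ ∀ t, t < fpass L m → t ≤ PS m t := by
  rw [mem_lagN] at hm
  obtain ⟨h1, h2⟩ := hm
  set q := fpass L m with hq
  have hspec : PS m q + 1 ≤ q ∨ q = L := Nat.find_spec (p := fun t => PS m t + 1 ≤ t ∨ t = L) ⟨L, Or.inr rfl⟩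
  have hmin : ∀ t, t < q → ¬(PS m t + 1 ≤ t ∨ t = L) :=
    fun t ht => Nat.find_min (p := fun t => PS m t + 1 ≤ t ∨ t = L) ⟨L, Or.inr rfl⟩ ht
  have hmin' : ∀ t, t < q → t ≤ PS m t := by
    intro t ht
    have := hmin t ht
    push_neg at this
    omega
  have hqL : q ≤ L := Nat.find_min' _ (Or.inr rfl)
  have hLpos : 1 ≤ L := by omega
  have hq1 : 1 ≤ q := by
    by_contra h
    have hq0 : q = 0 := by omega
    have := hspec
    rw [hq0] at this
    have h0 : PS m 0 = 0 := rfl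
    omega
  have hqpass : PS m q + 1 ≤ q := by
    rcases hspec with h | h
    · exact h
    · rw [h]; omega
  have hprev : q - 1 ≤ PS m (q - 1) := hmin' (q - 1) (by omega)
  have hPSsucc : PS m (q - 1 + 1) = PS m (q - 1) + fext m (q - 1) := PS_succ m (q - 1)
  rw [show q - 1 + 1 = q from by omega] at hPSsucc
  exact ⟨hq1, hqL, by omega, by omega, hmin'⟩

lemma step_split (j L : ℕ) (hj : 1 ≤ j) (ν : ℕ → ℕ) :
    (∑ m ∈ lagN (j + 1) L, ∏ i : Fin L, (ν (i : ℕ) + 1).choose (m i))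
      = ∑ q ∈ Icc 1 L,
          (∑ m1 ∈ lagM (q - 1), ∏ i : Fin (q - 1), (ν (i : ℕ) + 1).choose (m1 i)) *
          (∑ m2 ∈ lagN j (L - q), ∏ i : Fin (L - q), (ν (q + (i : ℕ)) + 1).choose (m2 i)) := by
  have hmap : ∀ m ∈ lagN (j + 1) L, fpass L m ∈ Icc 1 L := by
    intro m hm
    obtain ⟨a, b, _⟩ := fpass_spec hj hm
    rw [mem_Icc]; exact ⟨a, b⟩
  rw [← Finset.sum_fiberwise_of_maps_to hmap]
  refine Finset.sum_congr rfl fun q hq => ?_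
  rw [mem_Icc] at hq
  obtain ⟨hq1, hqL⟩ := hq
  rw [Finset.sum_mul_sum, ← Finset.sum_product']
  refine Finset.sum_nbij'
    (fun m => ((fun k : Fin (q - 1) => fext m (k : ℕ)), (fun k : Fin (L - q) => fext m (q + (k : ℕ)))))
    (fun b => (fun t : Fin L => if ((t : ℕ)) < q - 1 then fext b.1 (t : ℕ)
      else if ((t : ℕ)) < q then 0 else fext b.2 ((t : ℕ) - q)))
    ?_ ?_ ?_ ?_ ?_
  · -- forward membership
    intro m hm
    rw [mem_filter] at hm
    obtain ⟨hm, hfib⟩ := hm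
    have hspec := fpass_spec hj hm
    rw [hfib] at hspec
    obtain ⟨_, _, hPSq, hz, hmin⟩ := hspec
    rw [mem_lagN] at hm
    obtain ⟨hsum, hballot⟩ := hm
    -- facts about restricted extensions
    have hr1 : ∀ t, fext (fun k : Fin (q - 1) => fext m (k : ℕ)) t
        = if t < q - 1 then fext m t else 0 := by
      intro t
      by_cases h : t < q - 1
      · rw [fext_lt _ h, if_pos h]
      · rw [fext_ge _ h, if_neg h]
    have hr2 : ∀ t, fext (fun k : Fin (L - q) => fext m (q + (k : ℕ))) t
        = if t < L - q then fext m (q + t) else 0 := by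
      intro t
      by_cases h : t < L - q
      · rw [fext_lt _ h, if_pos h]
      · rw [fext_ge _ h, if_neg h]
    have hPS1 : ∀ t, t ≤ q - 1 → PS (fun k : Fin (q - 1) => fext m (k : ℕ)) t = PS m t := by
      intro t ht
      refine Finset.sum_congr rfl fun k hk => ?_
      rw [mem_range] at hk
      rw [hr1, if_pos (by omega)]
    have hPS2 : ∀ t, PS m (q + t) = PS m q + PS (fun k : Fin (L - q) => fext m (q + (k : ℕ))) t
        ∨ ¬ (t ≤ L - q) := by
      intro t
      by_cases ht : t ≤ L - q
      · left
        rw [PS_add]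
        congr 1
        refine Finset.sum_congr rfl fun k hk => ?_
        rw [mem_range] at hk
        rw [hr2, if_pos (by omega)]
      · right; exact ht
    have hPSprev : PS m (q - 1) = q - 1 := by
      have := PS_succ m (q - 1)
      rw [show q - 1 + 1 = q from by omega] at this
      have h2 := hmin (q - 1) (by omega)
      omega
    rw [Finset.mem_product]
    dsimp only
    constructor
    · rw [mem_lagM]
      constructor
      · rw [hPS1 (q - 1) le_rfl]; exact hPSprev
      · intro t ht
        rw [hPS1 t (by omega)]
        exact hmin t (by omega)
    · rw [mem_lagN]
      have hLq := hPS2 (L - q)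
      rw [show q + (L - q) = L from by omega] at hLq
      rcases hLq with hLq | hLq
      · constructor
        · omega
        · intro t ht
          have h3 := hPS2 t
          rcases h3 with h3 | h3
          · have h4 := hballot (q + t) (by omega)
            omega
          · omega
      · omega
  · -- backward membership
    rintro ⟨m1, m2⟩ hb
    dsimp only
    rw [Finset.mem_product] at hb
    dsimp only at hb
    obtain ⟨hb1, hb2⟩ := hb
    rw [mem_lagM] at hb1
    rw [mem_lagN] at hb2
    obtain ⟨hs1, hballot1⟩ := hb1
    obtain ⟨hs2, hballot2⟩ := hb2
    set mm := (fun t : Fin L => if ((t : ℕ)) < q - 1 then fext m1 (t : ℕ)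
      else if ((t : ℕ)) < q then 0 else fext m2 ((t : ℕ) - q)) with hmm
    have hext : ∀ t, fext mm t = if t < q - 1 then fext m1 t
        else if t < q then 0 else fext m2 (t - q) := by
      intro t
      by_cases h : t < L
      · rw [fext_lt mm h]
      · rw [fext_ge mm h, if_neg (by omega), if_neg (by omega),
          fext_ge m2 (by omega)]
    have hPSa : ∀ t, t ≤ q - 1 → PS mm t = PS m1 t := by
      intro t ht
      refine Finset.sum_congr rfl fun k hk => ?_
      rw [mem_range] at hk
      rw [hext, if_pos (by omega)]
    have hPSq : PS mm q = q - 1 := by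
      rw [show q = (q - 1) + 1 from by omega, PS_succ, hPSa (q - 1) le_rfl, hext,
        if_neg (by omega), if_pos (by omega)]
      omega
    have hPSb : ∀ s, PS mm (q + s) = q - 1 + PS m2 s := by
      intro s
      rw [PS_add, hPSq]
      congr 1
      refine Finset.sum_congr rfl fun k _ => ?_
      rw [hext, if_neg (by omega), if_neg (by omega), show q + k - q = k from by omega]
    have hmemN : mm ∈ lagN (j + 1) L := by
      rw [mem_lagN]
      constructor
      · have := hPSb (L - q)
        rw [show q + (L - q) = L from by omega] at this
        omega
      · intro t ht
        rcases Nat.lt_or_ge t q with h | h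
        · have h2 : PS mm t = PS m1 t := hPSa t (by omega)
          rcases Nat.lt_or_ge t (q - 1) with h3 | h3
          · have := hballot1 t h3; omega
          · have h4 : t = q - 1 := by omega
            subst h4
            omega
        · have h2 := hPSb (t - q)
          rw [show q + (t - q) = t from by omega] at h2
          have h3 := hballot2 (t - q) (by omega)
          omega
    rw [mem_filter]
    refine ⟨hmemN, ?_⟩
    refine fpass_eq mm hq1 hqL (by omega) ?_
    intro t ht
    have h2 : PS mm t = PS m1 t := hPSa t (by omega)
    rcases Nat.lt_or_ge t (q - 1) with h3 | h3
    · have := hballot1 t h3; omega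
    · have h4 : t = q - 1 := by omega
      subst h4
      omega
  · -- left inverse
    intro m hm
    rw [mem_filter] at hm
    obtain ⟨hm', hfib⟩ := hm
    have hspec := fpass_spec hj hm'
    rw [hfib] at hspec
    obtain ⟨_, _, _, hz, _⟩ := hspec
    funext t
    simp only []
    by_cases h1 : (t : ℕ) < q - 1
    · rw [if_pos h1, fext_lt _ h1, fext_lt m (by omega : ((⟨(t : ℕ), h1⟩ : Fin (q-1)) : ℕ) < L)]
    · rw [if_neg h1]
      by_cases h2 : (t : ℕ) < q
      · rw [if_pos h2]
        have : (t : ℕ) = q - 1 := by omega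
        rw [← fext_val m t, this, hz]
      · rw [if_neg h2]
        rw [fext_lt _ (show (t : ℕ) - q < L - q from by omega)]
        rw [show q + (((⟨(t : ℕ) - q, _⟩ : Fin (L - q))) : ℕ) = (t : ℕ) from by simp; omega]
        rw [fext_val]
  · -- right inverse
    rintro ⟨m1, m2⟩ hb
    dsimp only
    rw [Finset.mem_product] at hb
    dsimp only at hb
    obtain ⟨hb1, hb2⟩ := hb
    set mm := (fun t : Fin L => if ((t : ℕ)) < q - 1 then fext m1 (t : ℕ)
      else if ((t : ℕ)) < q then 0 else fext m2 ((t : ℕ) - q)) with hmm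
    have hext : ∀ t, fext mm t = if t < q - 1 then fext m1 t
        else if t < q then 0 else fext m2 (t - q) := by
      intro t
      by_cases h : t < L
      · rw [fext_lt mm h]
      · rw [fext_ge mm h, if_neg (by omega), if_neg (by omega),
          fext_ge m2 (by omega)]
    refine Prod.ext ?_ ?_
    · funext k
      simp only []
      rw [hext, if_pos k.isLt, fext_val]
    · funext k
      simp only []
      rw [hext, if_neg (by omega), if_neg (by omega), show q + (k : ℕ) - q = (k : ℕ) from by omega,
        fext_val]
  · -- values
    intro m hm
    rw [mem_filter] at hm
    obtain ⟨hm', hfib⟩ := hm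
    have hspec := fpass_spec hj hm'
    rw [hfib] at hspec
    obtain ⟨_, _, _, hz, _⟩ := hspec
    dsimp only
    rw [prod_fin ν m, prod_fin ν (fun k : Fin (q - 1) => fext m (k : ℕ)),
      prod_fin (fun k => ν (q + k)) (fun k : Fin (L - q) => fext m (q + (k : ℕ)))]
    have hr1 : ∀ t, fext (fun k : Fin (q - 1) => fext m (k : ℕ)) t
        = if t < q - 1 then fext m t else 0 := by
      intro t
      by_cases h : t < q - 1
      · rw [fext_lt _ h, if_pos h]
      · rw [fext_ge _ h, if_neg h]
    have hr2 : ∀ t, fext (fun k : Fin (L - q) => fext m (q + (k : ℕ))) t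
        = if t < L - q then fext m (q + t) else 0 := by
      intro t
      by_cases h : t < L - q
      · rw [fext_lt _ h, if_pos h]
      · rw [fext_ge _ h, if_neg h]
    have hsplit : (∏ k ∈ range L, (ν k + 1).choose (fext m k))
        = ((∏ k ∈ range (q - 1), (ν k + 1).choose (fext m k))
            * (ν (q - 1) + 1).choose (fext m (q - 1)))
          * ∏ k ∈ range (L - q), (ν (q + k) + 1).choose (fext m (q + k)) := by
      rw [← Finset.prod_range_succ (fun k => (ν k + 1).choose (fext m k)) (q - 1),
        show q - 1 + 1 = q from by omega, ← Finset.prod_range_add,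
        show q + (L - q) = L from by omega]
    rw [hsplit, hz, Nat.choose_zero_right, mul_one]
    congr 1
    · refine Finset.prod_congr rfl fun k hk => ?_
      rw [mem_range] at hk
      rw [hr1, if_pos hk]
    · refine Finset.prod_congr rfl fun k hk => ?_
      rw [mem_range] at hk
      rw [hr2, if_pos hk]

end LagRec
namespace LagRec

lemma lagd_congr {a b : ℕ} {f g : ℕ → ℕ} (h1 : a = b) (h2 : f = g) : lagd a f = lagd b g := by
  rw [h1, h2]

lemma psum_zero {j : ℕ} (p : Fin (j + 1) → ℕ) : psum p 0 = 0 := by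
  rw [psum]
  convert Finset.sum_empty
  ext r
  simp

lemma psum_cons_succ {j : ℕ} (q : ℕ) (p' : Fin j → ℕ) (i : Fin j) :
    psum (Fin.cons (α := fun _ => ℕ) q p') i.succ = q + psum p' i := by
  rw [psum, psum, Finset.sum_filter, Finset.sum_filter, Fin.sum_univ_succ]
  simp only [Fin.cons_zero, Fin.cons_succ, Fin.val_succ, Fin.val_zero]
  rw [if_pos (by omega)]
  congr 1
  refine Finset.sum_congr rfl fun r _ => ?_
  by_cases h : (r : ℕ) < (i : ℕ)
  · rw [if_pos (by omega), if_pos h]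
  · rw [if_neg (by omega), if_neg h]

lemma compositions_pos_empty {j : ℕ} (hj : 1 ≤ j) : compositions j 0 = ∅ := by
  rw [Finset.eq_empty_iff_forall_notMem]
  intro p hp
  rw [mem_compositions] at hp
  obtain ⟨h1, h2⟩ := hp
  have := Finset.single_le_sum (f := p) (fun i _ => Nat.zero_le (p i)) (Finset.mem_univ ⟨0, by omega⟩)
  have := h2 ⟨0, by omega⟩
  omega

lemma compositions_one {n : ℕ} (hn : 1 ≤ n) : compositions 1 n = {fun _ => n} := by
  ext p
  rw [mem_compositions, Finset.mem_singleton]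
  constructor
  · rintro ⟨h1, _⟩
    funext i
    rw [Subsingleton.elim i 0]
    rw [Fin.sum_univ_one] at h1
    exact h1
  · rintro rfl
    exact ⟨by rw [Fin.sum_univ_one], fun i => hn⟩

lemma comp_split (j n : ℕ) (G : (Fin (j + 1) → ℕ) → ℕ) :
    ∑ p ∈ compositions (j + 1) n, G p
      = ∑ q ∈ Icc 1 n, ∑ p' ∈ compositions j (n - q), G (Fin.cons q p') := by
  have hmap : ∀ p ∈ compositions (j + 1) n, p 0 ∈ Icc 1 n := by
    intro p hp
    rw [mem_compositions] at hp
    obtain ⟨h1, h2⟩ := hp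
    have := Finset.single_le_sum (f := p) (fun i _ => Nat.zero_le (p i)) (Finset.mem_univ 0)
    rw [mem_Icc]
    exact ⟨h2 0, by omega⟩
  rw [← Finset.sum_fiberwise_of_maps_to hmap]
  refine Finset.sum_congr rfl fun q hq => ?_
  rw [mem_Icc] at hq
  refine Finset.sum_nbij' Fin.tail (Fin.cons (α := fun _ => ℕ) q) ?_ ?_ ?_ ?_ ?_
  · intro p hp
    rw [mem_filter] at hp
    obtain ⟨hp, hp0⟩ := hp
    rw [mem_compositions] at hp
    obtain ⟨h1, h2⟩ := hp
    rw [mem_compositions]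
    rw [Fin.sum_univ_succ, hp0] at h1
    have h3 : ∑ i : Fin j, Fin.tail p i = ∑ i : Fin j, p i.succ := rfl
    constructor
    · omega
    · intro i
      exact h2 i.succ
  · intro p' hp'
    rw [mem_compositions] at hp'
    obtain ⟨h1, h2⟩ := hp'
    rw [mem_filter, mem_compositions]
    refine ⟨⟨?_, ?_⟩, Fin.cons_zero _ _⟩
    · rw [Fin.sum_univ_succ]
      simp only [Fin.cons_zero, Fin.cons_succ]
      omega
    · intro i
      rcases Fin.eq_zero_or_eq_succ i with rfl | ⟨k, rfl⟩
      · simp only [Fin.cons_zero]; omega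
      · simp only [Fin.cons_succ]; exact h2 k
  · intro p hp
    rw [mem_filter] at hp
    rw [← hp.2]
    exact Fin.cons_self_tail p
  · intro p' _
    funext i
    simp [Fin.tail]
  · intro p hp
    rw [mem_filter] at hp
    rw [← hp.2, Fin.cons_self_tail p]

lemma lagN_one (L : ℕ) : lagN 1 L = lagM L := by
  ext m
  rw [mem_lagN, mem_lagM]
  constructor
  · rintro ⟨h1, h2⟩
    exact ⟨by omega, fun t ht => by have := h2 t ht; omega⟩
  · rintro ⟨h1, h2⟩
    exact ⟨by omega, fun t ht => by have := h2 t ht; omega⟩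

lemma key : ∀ j, 1 ≤ j → ∀ (L : ℕ) (ν : ℕ → ℕ),
    (∑ m ∈ lagN j L, ∏ i : Fin L, (ν (i : ℕ) + 1).choose (m i))
      = ∑ p ∈ compositions j (L + 1),
          ∏ i : Fin j, lagd (p i - 1) (fun t => ν (psum p i + t)) := by
  intro j hj
  induction j, hj using Nat.le_induction with
  | base =>
    intro L ν
    rw [lagN_one, compositions_one (by omega : 1 ≤ L + 1), Finset.sum_singleton,
      Fin.prod_univ_one, psum_zero]
    have h2 : (fun t => ν (0 + t)) = ν := by funext t; rw [Nat.zero_add]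
    rw [h2, show L + 1 - 1 = L from by omega]
    rfl
  | succ j hj IH =>
    intro L ν
    rw [step_split j L hj ν, comp_split j (L + 1) _,
      Finset.sum_Icc_succ_top (by omega : 1 ≤ L + 1),
      show L + 1 - (L + 1) = 0 from by omega, compositions_pos_empty hj,
      Finset.sum_empty, add_zero]
    refine Finset.sum_congr rfl fun q hq => ?_
    rw [mem_Icc] at hq
    have hLq : L + 1 - q = (L - q) + 1 := Nat.succ_sub hq.2
    have hB : (∑ m2 ∈ lagN j (L - q), ∏ i : Fin (L - q), (ν (q + (i : ℕ)) + 1).choose (m2 i))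
        = ∑ p' ∈ compositions j ((L - q) + 1),
            ∏ i : Fin j, lagd (p' i - 1) (fun t => ν (q + (psum p' i + t))) :=
      IH (L - q) (fun t => ν (q + t))
    rw [hB, hLq, Finset.mul_sum]
    refine Finset.sum_congr rfl fun p' hp' => ?_
    rw [Fin.prod_univ_succ]
    congr 1
    · refine lagd_congr ?_ ?_
      · rw [Fin.cons_zero]
      · rw [psum_zero]
        funext t
        rw [Nat.zero_add]
    · refine Finset.prod_congr rfl fun i _ => ?_
      refine lagd_congr ?_ ?_
      · rw [Fin.cons_succ]
      · rw [psum_cons_succ]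
        funext t
        rw [Nat.add_assoc]

end LagRec

/-- The Lagrange coefficients satisfy the recursion
`d_ℓ(n_1,...,n_ℓ) = ∑_{j=1}^{ℓ} ∑_{(p_1,...,p_j) ⊨ ℓ} C(n_1+1, j) ·
 d_{p_1−1}(n_2,...,n_{p_1}) · d_{p_2−1}(n_{p_1+2},...,n_{p_1+p_2}) ⋯
 d_{p_j−1}(n_{p_1+⋯+p_{j-1}+2},...,n_ℓ)`,
where each block of arguments skips one index at its start. -/
theorem lagrange_coefficient_block_recursion (ℓ : ℕ) (hℓ : 1 ≤ ℓ)
    (nn : ℕ → ℕ) (hpos : ∀ i, 0 < nn i) :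
    lagd ℓ nn = ∑ j ∈ Finset.Icc 1 ℓ, ∑ p ∈ compositions j ℓ,
      (nn 0 + 1).choose j *
        ∏ i : Fin j, lagd (p i - 1) (fun t => nn (psum p i + 1 + t)) := by
  obtain ⟨L, rfl⟩ : ∃ L, ℓ = L + 1 := ⟨ℓ - 1, by omega⟩
  have h0 : lagd (L + 1) nn
      = ∑ m ∈ lagM (L + 1), ∏ i : Fin (L + 1), (nn (i : ℕ) + 1).choose (m i) := rfl
  rw [h0, LagRec.head_split L nn]
  refine Finset.sum_congr rfl fun j hj => ?_
  rw [Finset.mem_Icc] at hj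
  have hkey : (∑ m ∈ LagRec.lagN j L, ∏ i : Fin L, (nn ((i : ℕ) + 1) + 1).choose (m i))
      = ∑ p ∈ compositions j (L + 1),
          ∏ i : Fin j, lagd (p i - 1) (fun t => nn ((psum p i + t) + 1)) :=
    LagRec.key j hj.1 L (fun t => nn (t + 1))
  rw [hkey, Finset.mul_sum]
  refine Finset.sum_congr rfl fun p hp => ?_
  congr 1
  refine Finset.prod_congr rfl fun i _ => ?_
  refine LagRec.lagd_congr rfl ?_
  funext t
  congr 1
  exact Nat.add_right_comm (psum p i) t 1
end
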